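/- Let S_λ be a weighted shift on a directed tree T with weights λ = {λ_v}_{v∈V°} such that E ⊆ D∞(S_λ). Assume that for every u ∈ V with Chi(u) ≠ ∅ the sequence {‖S_λⁿ e_u‖²}_{n≥0} is a Stieltjes moment sequence and the Stieltjes moment sequence {‖S_λ^{n+1} e_u‖²}_{n≥0} is determinate. Then there exist a system {μ_u}_{u∈V} of Borel probability measures on ℝ₊ and a system {ε_u}_{u∈V} of nonnegative real numbers such that for every u ∈ V and every Borel σ ⊆ ℝ₊: μ_u(σ) = Σ_{v∈Chi(u)} |λ_v|² ∫_σ (1/s) dμ_v(s) + ε_u δ₀(σ). -/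

import Mathlib

open Filter
open scoped ENNReal InnerProductSpace ComplexConjugate

attribute [local instance] Classical.propDecidable

noncomputable section

namespace Paper

universe u

/-- A directed tree: a directed graph which is connected (as an undirected graph), has no
(directed) circuits, and in which every vertex has at most one parent. -/
structure DirectedTree (V : Type*) where
  E : V → V → Prop
  connected : ∀ u v : V, Relation.ReflTransGen (fun a b => E a b ∨ E b a) u v
  noCircuits : ∀ v : V, ¬ Relation.TransGen E v v
  par_unique : ∀ ⦃u₁ u₂ v : V⦄, E u₁ v → E u₂ v → u₁ = u₂

namespace DirectedTree

variable {V : Type*} (t : DirectedTree V)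

/-- The set of children of a vertex. -/
def chi (u : V) : Set V := {v | t.E u v}

/-- `v` has a parent, i.e. `v ∈ V°`. -/
def hasPar (v : V) : Prop := ∃ u, t.E u v

/-- The parent partial function, as a total function with junk value `v` at parentless
vertices. -/
noncomputable def par (v : V) : V := if h : t.hasPar v then h.choose else v

/-- Children of a set of vertices. -/
def chiSet (W : Set V) : Set V := {v | ∃ u ∈ W, t.E u v}

/-- `n`-fold children of a set of vertices. -/
def chiIter : ℕ → Set V → Set V
  | 0, W => W
  | n + 1, W => t.chiSet (chiIter n W)

/-- `Chi^⟨n⟩(u)`. -/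
def chin (n : ℕ) (u : V) : Set V := t.chiIter n {u}

/-- The descendants of a vertex. -/
def des (u : V) : Set V := ⋃ n : ℕ, t.chin n u

/-- `λ_{u∣v} = ∏_{j=0}^{n-1} λ_{par^j(v)}` for `v ∈ Chi^⟨n⟩(u)`. -/
noncomputable def wprod (lam : V → ℂ) (n : ℕ) (v : V) : ℂ :=
  ∏ j ∈ Finset.range n, lam (t.par^[j] v)

end DirectedTree

/-- The Hilbert space `ℓ²(V)`. -/
abbrev H2 (V : Type*) := lp (fun _ : V => ℂ) 2

/-- The basis vector `e_u ∈ ℓ²(V)`. -/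
noncomputable def evec {V : Type*} (u : V) : H2 V :=
  haveI := Classical.decEq V
  lp.single 2 u 1

/-- The linear subspace `E = lin{e_u : u ∈ V}`. -/
noncomputable def espan (V : Type*) : Submodule ℂ (H2 V) :=
  Submodule.span ℂ (Set.range (evec : V → H2 V))

/-- The map `Λ_T` on all functions `V → ℂ`:
`(Λ_T f)(v) = λ_v f(par(v))` for `v ∈ V°` and `0` at the root. -/
noncomputable def lamLin {V : Type*} (t : DirectedTree V) (lam : V → ℂ) :
    (V → ℂ) →ₗ[ℂ] (V → ℂ) where
  toFun f := fun v => if t.hasPar v then lam v * f (t.par v) else 0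
  map_add' f g := by
    funext v
    by_cases h : t.hasPar v <;> simp [h, mul_add]
  map_smul' c f := by
    funext v
    by_cases h : t.hasPar v <;> simp [h] <;> ring

/-- The domain `{f ∈ ℓ²(V) : Λ_T f ∈ ℓ²(V)}` of the weighted shift. -/
noncomputable def shiftDom {V : Type*} (t : DirectedTree V) (lam : V → ℂ) :
    Submodule ℂ (H2 V) where
  carrier := {f | Memℓp (lamLin t lam f) 2}
  zero_mem' := by
    simpa only [Set.mem_setOf_eq, lp.coeFn_zero, map_zero] using zero_memℓp
  add_mem' := by
    intro f g hf hg
    simp only [Set.mem_setOf_eq, lp.coeFn_add, map_add] at *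
    exact hf.add hg
  smul_mem' := by
    intro c f hf
    simp only [Set.mem_setOf_eq] at hf ⊢
    rw [lp.coeFn_smul, LinearMap.map_smul]
    exact hf.const_smul c

/-- The weighted shift `S_λ` on the directed tree `T`, as an unbounded operator in `ℓ²(V)`. -/
noncomputable def shift {V : Type*} (t : DirectedTree V) (lam : V → ℂ) :
    H2 V →ₗ.[ℂ] H2 V where
  domain := shiftDom t lam
  toFun :=
    { toFun := fun f => (⟨lamLin t lam f, f.2⟩ : H2 V)
      map_add' := by
        intro f g
        apply lp.ext
        simp only [Submodule.coe_add, lp.coeFn_add, map_add]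
      map_smul' := by
        intro c f
        apply lp.ext
        simp only [SetLike.val_smul, lp.coeFn_smul, LinearMap.map_smul, RingHom.id_apply] }

section Operator

variable {H : Type*} [NormedAddCommGroup H] [InnerProductSpace ℂ H]

/-- `x ∈ D(Tⁿ)`. -/
def iterMem (T : H →ₗ.[ℂ] H) : ℕ → H → Prop
  | 0, _ => True
  | n + 1, x => ∃ h : x ∈ T.domain, iterMem T n (T ⟨x, h⟩)

/-- `Tⁿ x` (junk value `0` if undefined along the way). -/
noncomputable def iterApp (T : H →ₗ.[ℂ] H) : ℕ → H → H
  | 0, x => x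
  | n + 1, x => if h : x ∈ T.domain then iterApp T n (T ⟨x, h⟩) else 0

/-- The inner product in the paper's convention: `⟨x, y⟩` is linear in `x`. -/
noncomputable def pinner (x y : H) : ℂ := inner (𝕜 := ℂ) y x

/-- `E ⊆ D∞(S_λ)` where `E = lin{e_u : u ∈ V}`. -/
def spanDomInfty {V : Type*} (t : DirectedTree V) (lam : V → ℂ) : Prop :=
  ∀ f ∈ espan V, ∀ n : ℕ, iterMem (shift t lam) n f

/-- A linear subspace `F` is a core of `T` if the graph of `T` is contained in the closure of
the graph of `T|_F`. -/
def IsCore (T : H →ₗ.[ℂ] H) (F : Submodule ℂ H) : Prop :=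
  (T.graph : Set (H × H)) ⊆ closure ((T.domRestrict F).graph : Set (H × H))

/-- `f` is a quasi-analytic vector of `T`:
`f ∈ D∞(T)` and `∑_{n ≥ 1} ‖Tⁿ f‖^{-1/n} = ∞` (convention `1/0 = ∞`). -/
def QuasiAnalyticVec (T : H →ₗ.[ℂ] H) (f : H) : Prop :=
  (∀ n : ℕ, iterMem T n f) ∧
    ∑' n : ℕ, (ENNReal.ofReal (‖iterApp T (n + 1) f‖ ^ (1 / (n + 1 : ℝ))))⁻¹ = ∞

end Operator

section NormalSubnormal

/-- A normal operator: closed, densely defined, with `D(N) = D(N*)` and `‖N* h‖ = ‖N h‖` on the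
common domain. -/
structure IsNormalOp {K : Type*} [NormedAddCommGroup K] [InnerProductSpace ℂ K]
    [CompleteSpace K] (N : K →ₗ.[ℂ] K) : Prop where
  dense : Dense (N.domain : Set K)
  isClosed : N.IsClosed
  dom_adjoint : N.adjoint.domain = N.domain
  norm_adjoint : ∀ (x : K) (hx : x ∈ N.domain) (hx' : x ∈ N.adjoint.domain),
    ‖N.adjoint ⟨x, hx'⟩‖ = ‖N ⟨x, hx⟩‖

/-- A normal extension of `S`: a Hilbert space `K`, an isometric linear embedding `J : H → K`,
and a normal operator `N` in `K` with `N (J h) = J (S h)` for all `h ∈ D(S)`. -/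
structure NormalExtension {H : Type u} [NormedAddCommGroup H] [InnerProductSpace ℂ H]
    (S : H →ₗ.[ℂ] H) : Type (u + 1) where
  K : Type u
  [instNG : NormedAddCommGroup K]
  [instIP : InnerProductSpace ℂ K]
  [instCS : CompleteSpace K]
  J : H →ₗᵢ[ℂ] K
  N : K →ₗ.[ℂ] K
  normal : IsNormalOp N
  ext_prop : ∀ x : S.domain, ∃ hx : J x ∈ N.domain, N ⟨J x, hx⟩ = J (S x)

/-- A densely defined operator is subnormal if it has a normal extension. -/
def Subnormal {H : Type u} [NormedAddCommGroup H] [InnerProductSpace ℂ H]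
    (S : H →ₗ.[ℂ] H) : Prop :=
  Dense (S.domain : Set H) ∧ Nonempty (NormalExtension S)

/-- A hyponormal operator: densely defined, `D(S) ⊆ D(S*)` and `‖S* f‖ ≤ ‖S f‖` on `D(S)`. -/
def Hyponormal {H : Type*} [NormedAddCommGroup H] [InnerProductSpace ℂ H] [CompleteSpace H]
    (S : H →ₗ.[ℂ] H) : Prop :=
  Dense (S.domain : Set H) ∧ S.domain ≤ S.adjoint.domain ∧
    ∀ (x : H) (hx : x ∈ S.domain) (hx' : x ∈ S.adjoint.domain),
      ‖S.adjoint ⟨x, hx'⟩‖ ≤ ‖S ⟨x, hx⟩‖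

end NormalSubnormal

section Stieltjes

open MeasureTheory

/-- `μ` is a representing measure of `{t_n}`: a positive Borel measure on `ℝ₊`
with `t_n = ∫_0^∞ sⁿ dμ(s)` for all `n`. -/
def IsRepMeasure (μ : Measure ℝ) (t : ℕ → ℝ) : Prop :=
  μ (Set.Iio 0) = 0 ∧ ∀ n : ℕ, Integrable (fun s => s ^ n) μ ∧ t n = ∫ s, s ^ n ∂μ

/-- `{t_n}` is a Stieltjes moment sequence. -/
def IsStieltjes (t : ℕ → ℝ) : Prop := ∃ μ : Measure ℝ, IsRepMeasure μ t

/-- A Stieltjes moment sequence is determinate if it has only one representing measure. -/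
def Determinate (t : ℕ → ℝ) : Prop :=
  ∀ ⦃μ ν : Measure ℝ⦄, IsRepMeasure μ t → IsRepMeasure ν t → μ = ν

/-- `∫_σ (1/s) dμ(s)`, with the convention `1/0 = ∞`. -/
noncomputable def recipInt (μ : Measure ℝ) (σ : Set ℝ) : ℝ≥0∞ :=
  ∫⁻ s in σ, (ENNReal.ofReal s)⁻¹ ∂μ

/-- The sequence `(θ, t_0, t_1, …)`. -/
def prepend (θ : ℝ) (t : ℕ → ℝ) : ℕ → ℝ
  | 0 => θ
  | n + 1 => t n

/-- `{t_n}` is positive definite. -/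
def PosDefSeq (t : ℕ → ℝ) : Prop :=
  ∀ (n : ℕ) (α : ℕ → ℂ),
    0 ≤ (∑ k ∈ Finset.range (n + 1), ∑ l ∈ Finset.range (n + 1),
      (t (k + l) : ℂ) * α k * (starRingEnd ℂ) (α l)).re

/-- The measure `ν_μ(σ) = ∫_σ (1/s) dμ(s) + (θ − ∫_0^∞ (1/s) dμ(s)) δ₀(σ)`. -/
noncomputable def numap (θ : ℝ) (μ : Measure ℝ) : Measure ℝ :=
  μ.withDensity (fun s => (ENNReal.ofReal s)⁻¹) +
    (ENNReal.ofReal θ - recipInt μ Set.univ) • Measure.dirac (0 : ℝ)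

/-- The measure `μ_ν(σ) = ∫_σ s dν(s)`. -/
noncomputable def mumap (ν : Measure ℝ) : Measure ℝ :=
  ν.withDensity fun s => ENNReal.ofReal s

end Stieltjes

section Consistency

open MeasureTheory

variable {V : Type*}

/-- The consistency condition \eqref{muu+} at the vertex `u`:
`μ_u(σ) = Σ_{v ∈ Chi(u)} |λ_v|² ∫_σ (1/s) dμ_v(s) + ε_u δ₀(σ)`. -/
def Consistent (t : DirectedTree V) (lam : V → ℂ) (μ : V → Measure ℝ) (ε : V → ℝ)
    (u : V) : Prop :=
  ∀ σ : Set ℝ, MeasurableSet σ →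
    μ u σ = (∑' v : t.chi u, ENNReal.ofReal (‖lam (v : V)‖ ^ 2) * recipInt (μ (v : V)) σ)
      + ENNReal.ofReal (ε u) * Measure.dirac (0 : ℝ) σ

/-- The measure `μ_u` from Lemma charsub2, built from the children measures:
`μ_u(σ) = Σ_{v ∈ Chi(u)} |λ_v|² ∫_σ (1/s) dμ_v(s) + ε_u δ₀(σ)` with
`ε_u = 1 − Σ_{v ∈ Chi(u)} |λ_v|² ∫_0^∞ (1/s) dμ_v(s)`. -/
noncomputable def consMeasure (t : DirectedTree V) (lam : V → ℂ) (μ : V → Measure ℝ)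
    (u : V) : Measure ℝ :=
  Measure.sum (fun v : t.chi u =>
      ENNReal.ofReal (‖lam (v : V)‖ ^ 2) •
        (μ (v : V)).withDensity fun s => (ENNReal.ofReal s)⁻¹) +
    (1 - ∑' v : t.chi u, ENNReal.ofReal (‖lam (v : V)‖ ^ 2) * recipInt (μ (v : V)) Set.univ) •
      Measure.dirac (0 : ℝ)

end Consistency

end Paper

open Paper MeasureTheory Filter
open scoped ENNReal

/-!
Write `m_u(n) = ‖S_λⁿ e_u‖²`. The vector `S_λⁿ e_u` is supported on the `n`-th generation of
descendants of `u`, and every such descendant lies below exactly one child of `u`; hence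
`m_u(n+1) = Σ_{v ∈ Chi(u)} |λ_v|² m_v(n)`. Take for `μ_u` a representing measure of `m_u`
(`δ₀` at a leaf). Then `s dμ_u(s)` and `Σ_{v ∈ Chi(u)} |λ_v|² μ_v` both represent `m_u(n+1)`,
so they coincide by determinacy. Dividing by `s` recovers `μ_u` off the origin, and the atom
`ε_u = μ_u({0})` accounts for the rest.
-/

namespace Paper

namespace DirectedTree

variable {V : Type*} (t : DirectedTree V)

theorem par_eq_of_E {u v : V} (h : t.E u v) : t.par v = u := by
  have hv : t.hasPar v := ⟨u, h⟩
  rw [par, dif_pos hv]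
  exact t.par_unique hv.choose_spec h

theorem mem_chin_succ_iff {n : ℕ} {u w : V} :
    w ∈ t.chin (n + 1) u ↔ t.hasPar w ∧ t.par w ∈ t.chin n u := by
  refine ⟨fun ⟨x, hx, hxw⟩ => ⟨⟨x, hxw⟩, (t.par_eq_of_E hxw).symm ▸ hx⟩, ?_⟩
  rintro ⟨⟨x, hxw⟩, hw⟩
  exact ⟨x, t.par_eq_of_E hxw ▸ hw, hxw⟩

theorem mem_chin_succ_iff_exists_chi {n : ℕ} {u w : V} :
    w ∈ t.chin (n + 1) u ↔ ∃ v ∈ t.chi u, w ∈ t.chin n v := by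
  induction n generalizing w with
  | zero =>
    exact ⟨fun ⟨x, hx, hxw⟩ => ⟨w, hx ▸ hxw, rfl⟩, fun ⟨v, hv, hw⟩ => ⟨u, rfl, hw ▸ hv⟩⟩
  | succ n ih =>
    simp only [t.mem_chin_succ_iff (n := n + 1), ih, t.mem_chin_succ_iff (n := n)]
    tauto

theorem par_iterate_of_mem_chin {n : ℕ} {u w : V} (h : w ∈ t.chin n u) : t.par^[n] w = u := by
  induction n generalizing w with
  | zero => exact h
  | succ n ih => exact ih ((t.mem_chin_succ_iff).1 h).2

variable (lam : V → ℂ)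

theorem wprod_succ (n : ℕ) (w : V) :
    t.wprod lam (n + 1) w = t.wprod lam n w * lam (t.par^[n] w) :=
  Finset.prod_range_succ _ _

theorem wprod_succ' (n : ℕ) (w : V) :
    t.wprod lam (n + 1) w = t.wprod lam n (t.par w) * lam w := by
  simp only [wprod, Finset.prod_range_succ', Function.iterate_succ_apply]
  rfl

end DirectedTree

section WeightedShift

variable {V : Type*} (t : DirectedTree V) (lam : V → ℂ)

theorem lamLin_indicator_chin (n : ℕ) (u : V) :
    lamLin t lam ((t.chin n u).indicator (t.wprod lam n)) =
      (t.chin (n + 1) u).indicator (t.wprod lam (n + 1)) := by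
  funext w
  show (if t.hasPar w then _ else _) = _
  by_cases hw : t.hasPar w
  · by_cases hpw : t.par w ∈ t.chin n u
    · rw [if_pos hw, Set.indicator_of_mem hpw,
        Set.indicator_of_mem (t.mem_chin_succ_iff.2 ⟨hw, hpw⟩), t.wprod_succ', mul_comm]
    · rw [if_pos hw, Set.indicator_of_notMem hpw, mul_zero,
        Set.indicator_of_notMem fun h => hpw (t.mem_chin_succ_iff.1 h).2]
  · rw [if_neg hw, Set.indicator_of_notMem fun h => hw (t.mem_chin_succ_iff.1 h).1]

theorem coe_iterApp_shift {f : H2 V} (hf : ∀ m, iterMem (shift t lam) m f) (n : ℕ) :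
    ⇑(iterApp (shift t lam) n f) = (lamLin t lam)^[n] ⇑f := by
  induction n generalizing f with
  | zero => rfl
  | succ n ih =>
    obtain ⟨hd, -⟩ := hf 1
    have hSf : ∀ m, iterMem (shift t lam) m (shift t lam ⟨f, hd⟩) := fun m => (hf (m + 1)).2
    rw [iterApp, dif_pos hd, ih hSf, Function.iterate_succ_apply]
    rfl

theorem coe_iterApp_shift_evec (hdom : spanDomInfty t lam) (n : ℕ) (u : V) :
    ⇑(iterApp (shift t lam) n (evec u)) = (t.chin n u).indicator (t.wprod lam n) := by
  rw [coe_iterApp_shift t lam (hdom _ (Submodule.subset_span ⟨u, rfl⟩))]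
  induction n with
  | zero =>
    funext w
    by_cases hw : w = u
    · subst hw
      simp [evec, Set.indicator, DirectedTree.chin, DirectedTree.chiIter, DirectedTree.wprod]
    · simp [evec, Set.indicator, DirectedTree.chin, DirectedTree.chiIter, hw]
  | succ n ih => rw [Function.iterate_succ_apply', ih, lamLin_indicator_chin]

theorem ofReal_norm_sq_eq_tsum (f : H2 V) :
    ENNReal.ofReal (‖f‖ ^ 2) = ∑' w, ENNReal.ofReal (‖f w‖ ^ 2) := by
  have h := lp.hasSum_norm (p := 2) (by norm_num) f
  simp only [ENNReal.toReal_ofNat, Real.rpow_ofNat] at h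
  rw [← h.tsum_eq, ENNReal.ofReal_tsum_of_nonneg (fun _ => by positivity) h.summable]

theorem norm_sq_iterApp_shift_evec_zero (u : V) :
    ‖iterApp (shift t lam) 0 (evec u)‖ ^ 2 = 1 := by
  simp [iterApp, evec, lp.norm_single]

theorem ofReal_norm_sq_indicator_chin_succ (n : ℕ) (u w : V) :
    ENNReal.ofReal (‖(t.chin (n + 1) u).indicator (t.wprod lam (n + 1)) w‖ ^ 2) =
      ∑' v : t.chi u, ENNReal.ofReal (‖lam v‖ ^ 2) *
        ENNReal.ofReal (‖(t.chin n v).indicator (t.wprod lam n) w‖ ^ 2) := by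
  by_cases hw : w ∈ t.chin (n + 1) u
  · obtain ⟨v, hv, hwv⟩ := t.mem_chin_succ_iff_exists_chi.1 hw
    -- `w` descends from exactly one child of `u`, namely `par^[n] w`
    rw [tsum_eq_single ⟨v, hv⟩ fun v' hv' => ?_]
    · rw [Set.indicator_of_mem hw, Set.indicator_of_mem hwv, t.wprod_succ,
        t.par_iterate_of_mem_chin hwv, norm_mul, mul_pow, ENNReal.ofReal_mul (by positivity),
        mul_comm]
    · rw [Set.indicator_of_notMem fun h => hv' (Subtype.ext ?_)]
      · simp
      · rw [← t.par_iterate_of_mem_chin h, t.par_iterate_of_mem_chin hwv]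
  · rw [Set.indicator_of_notMem hw, norm_zero, zero_pow two_ne_zero, ENNReal.ofReal_zero,
      eq_comm, ENNReal.tsum_eq_zero]
    intro v
    rw [Set.indicator_of_notMem fun h => hw (t.mem_chin_succ_iff_exists_chi.2 ⟨v, v.2, h⟩)]
    simp

theorem ofReal_norm_sq_iterApp_shift_evec_succ (hdom : spanDomInfty t lam) (n : ℕ) (u : V) :
    ENNReal.ofReal (‖iterApp (shift t lam) (n + 1) (evec u)‖ ^ 2) =
      ∑' v : t.chi u, ENNReal.ofReal (‖lam v‖ ^ 2) *
        ENNReal.ofReal (‖iterApp (shift t lam) n (evec (v : V))‖ ^ 2) := by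
  simp only [ofReal_norm_sq_eq_tsum, coe_iterApp_shift_evec t lam hdom,
    ofReal_norm_sq_indicator_chin_succ, ← ENNReal.tsum_mul_left]
  exact ENNReal.tsum_comm

theorem norm_sq_iterApp_shift_evec_succ_of_chi_eq_empty (hdom : spanDomInfty t lam) {u : V}
    (hu : t.chi u = ∅) (n : ℕ) : ‖iterApp (shift t lam) (n + 1) (evec u)‖ ^ 2 = 0 := by
  have := Set.isEmpty_coe_sort.2 hu
  have h := ofReal_norm_sq_iterApp_shift_evec_succ t lam hdom n u
  rw [tsum_empty, ENNReal.ofReal_eq_zero] at h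
  exact h.antisymm (sq_nonneg _)

end WeightedShift

section MomentMeasures

variable {μ : Measure ℝ} {m : ℕ → ℝ}

theorem ae_nonneg_of_measure_Iio_eq_zero (h : μ (Set.Iio 0) = 0) : ∀ᵐ s ∂μ, 0 ≤ s :=
  ae_iff.2 (by simpa only [not_le, Set.Iio_def] using h)

theorem IsRepMeasure.ae_nonneg (h : IsRepMeasure μ m) : ∀ᵐ s ∂μ, 0 ≤ s :=
  ae_nonneg_of_measure_Iio_eq_zero h.1

theorem IsRepMeasure.lintegral_pow (h : IsRepMeasure μ m) (n : ℕ) :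
    ∫⁻ s, ENNReal.ofReal (s ^ n) ∂μ = ENNReal.ofReal (m n) := by
  obtain ⟨hint, hm⟩ := h.2 n
  rw [hm, ofReal_integral_eq_lintegral_ofReal hint
    (h.ae_nonneg.mono fun _ hs => pow_nonneg hs n)]

theorem IsRepMeasure.nonneg (h : IsRepMeasure μ m) (n : ℕ) : 0 ≤ m n :=
  (h.2 n).2 ▸ integral_nonneg_of_ae (h.ae_nonneg.mono fun _ hs => pow_nonneg hs n)

theorem isRepMeasure_of_lintegral_pow (hm : ∀ n, 0 ≤ m n) (h0 : μ (Set.Iio 0) = 0)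
    (h : ∀ n, ∫⁻ s, ENNReal.ofReal (s ^ n) ∂μ = ENNReal.ofReal (m n)) : IsRepMeasure μ m := by
  refine ⟨h0, fun n => ?_⟩
  have hpow : 0 ≤ᵐ[μ] fun s => s ^ n :=
    (ae_nonneg_of_measure_Iio_eq_zero h0).mono fun s hs => pow_nonneg hs n
  have hint : Integrable (fun s : ℝ => s ^ n) μ := by
    refine ⟨(continuous_pow n).aestronglyMeasurable, ?_⟩
    rw [hasFiniteIntegral_iff_ofReal hpow, h n]
    exact ENNReal.ofReal_lt_top
  rw [integral_eq_lintegral_of_nonneg_ae hpow hint.1, h n, ENNReal.toReal_ofReal (hm n)]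
  exact ⟨hint, rfl⟩

theorem IsRepMeasure.isProbabilityMeasure (h : IsRepMeasure μ m) (h0 : m 0 = 1) :
    IsProbabilityMeasure μ :=
  ⟨by simpa [h0] using h.lintegral_pow 0⟩

theorem IsRepMeasure.eq_zero (h : IsRepMeasure μ m) (h0 : m 0 = 0) : μ = 0 :=
  Measure.measure_univ_eq_zero.1 (by simpa [h0] using h.lintegral_pow 0)

theorem isRepMeasure_dirac_zero (h0 : m 0 = 1) (hsucc : ∀ n, m (n + 1) = 0) :
    IsRepMeasure (Measure.dirac 0) m := by
  have hm : ∀ n, m n = 0 ^ n := by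
    rintro (_ | n)
    · simp [h0]
    · simp [hsucc]
  refine isRepMeasure_of_lintegral_pow (fun n => hm n ▸ by positivity) (by simp) fun n => ?_
  rw [lintegral_dirac, hm]

theorem measure_Iio_mumap (h0 : μ (Set.Iio 0) = 0) : mumap μ (Set.Iio 0) = 0 := by
  rw [mumap, withDensity_apply _ measurableSet_Iio]
  exact setLIntegral_measure_zero _ _ h0

theorem lintegral_pow_mumap (h0 : μ (Set.Iio 0) = 0) (n : ℕ) :
    ∫⁻ s, ENNReal.ofReal (s ^ n) ∂mumap μ = ∫⁻ s, ENNReal.ofReal (s ^ (n + 1)) ∂μ := by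
  rw [mumap, lintegral_withDensity_eq_lintegral_mul _ ENNReal.measurable_ofReal (by fun_prop)]
  refine lintegral_congr_ae ((ae_nonneg_of_measure_Iio_eq_zero h0).mono fun s hs => ?_)
  simp [← ENNReal.ofReal_mul hs, pow_succ']

theorem IsRepMeasure.mumap (h : IsRepMeasure μ m) : IsRepMeasure (mumap μ) fun n => m (n + 1) :=
  isRepMeasure_of_lintegral_pow (fun n => h.nonneg _) (measure_Iio_mumap h.1) fun n => by
    rw [lintegral_pow_mumap h.1, h.lintegral_pow]

theorem isRepMeasure_sum_smul {ι : Type*} {c : ι → ℝ≥0∞} {ν : ι → Measure ℝ}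
    {mν : ι → ℕ → ℝ} (hν : ∀ i, IsRepMeasure (ν i) (mν i)) (hm : ∀ n, 0 ≤ m n)
    (hsum : ∀ n, ENNReal.ofReal (m n) = ∑' i, c i * ENNReal.ofReal (mν i n)) :
    IsRepMeasure (Measure.sum fun i => c i • ν i) m := by
  refine isRepMeasure_of_lintegral_pow hm ?_ fun n => ?_
  · simp [Measure.sum_apply _ measurableSet_Iio, (hν _).1]
  · simp [lintegral_sum_measure, lintegral_smul_measure, (hν _).lintegral_pow, hsum]

theorem setLIntegral_inv_mumap {σ : Set ℝ} (hσ : MeasurableSet σ) :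
    ∫⁻ s in σ, (ENNReal.ofReal s)⁻¹ ∂mumap μ = μ (σ ∩ Set.Ioi 0) := by
  have hind :
      (fun s => ENNReal.ofReal s * (ENNReal.ofReal s)⁻¹) = (Set.Ioi 0).indicator 1 := by
    funext s
    by_cases hs : 0 < s
    · simp [hs, ENNReal.mul_inv_cancel]
    · simp [hs, ENNReal.ofReal_eq_zero.2 (not_lt.1 hs)]
  rw [mumap, restrict_withDensity hσ,
    lintegral_withDensity_eq_lintegral_mul _ ENNReal.measurable_ofReal (by fun_prop)]
  simp only [Pi.mul_apply, hind, lintegral_indicator_one measurableSet_Ioi,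
    Measure.restrict_apply measurableSet_Ioi, Set.inter_comm]

theorem measure_eq_measure_inter_Ioi_add_dirac (h0 : μ (Set.Iio 0) = 0) {σ : Set ℝ}
    (hσ : MeasurableSet σ) : μ σ = μ (σ ∩ Set.Ioi 0) + μ {0} * Measure.dirac 0 σ := by
  have hzero : μ (σ ∩ {0}) = μ {0} * Measure.dirac 0 σ := by
    by_cases h : (0 : ℝ) ∈ σ <;> simp [h, Measure.dirac_apply' _ hσ]
  calc μ σ = μ (σ ∩ Set.Ici 0) := (measure_inter_conull (by rwa [Set.compl_Ici])).symm
    _ = μ (σ ∩ Set.Ioi 0) + μ (σ ∩ {0}) := by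
      rw [← Set.Ioi_insert, Set.insert_eq, Set.inter_union_distrib_left, add_comm,
        measure_union _ (hσ.inter measurableSet_Ioi)]
      exact Set.disjoint_left.2 fun s hs hs' => (Set.mem_Ioi.1 hs'.2).ne' hs.2
    _ = μ (σ ∩ Set.Ioi 0) + μ {0} * Measure.dirac 0 σ := by rw [hzero]

end MomentMeasures

theorem consistent_of_mumap_eq_sum {V : Type*} {t : DirectedTree V} {lam : V → ℂ}
    {μ : V → Measure ℝ} {u : V} [IsFiniteMeasure (μ u)] (h0 : μ u (Set.Iio 0) = 0)
    (h : mumap (μ u) = Measure.sum fun v : t.chi u => ENNReal.ofReal (‖lam v‖ ^ 2) • μ v) :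
    Consistent t lam μ (fun u => (μ u {0}).toReal) u := by
  intro σ hσ
  rw [ENNReal.ofReal_toReal (measure_ne_top _ _), measure_eq_measure_inter_Ioi_add_dirac h0 hσ,
    ← setLIntegral_inv_mumap hσ, h]
  simp [Measure.restrict_sum _ hσ, lintegral_sum_measure, recipInt]

end Paper

/-- determinacy yields a consistent system of probability measures. -/
theorem stmt13 {V : Type*} (t : Paper.DirectedTree V) (lam : V → ℂ)
    (hdom : spanDomInfty t lam)
    (hmom : ∀ u : V, (t.chi u).Nonempty →
      IsStieltjes (fun n => ‖iterApp (shift t lam) n (evec u)‖ ^ 2) ∧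
      Determinate fun n => ‖iterApp (shift t lam) (n + 1) (evec u)‖ ^ 2) :
    ∃ (μ : V → Measure ℝ) (ε : V → ℝ),
      (∀ u : V, IsProbabilityMeasure (μ u) ∧ μ u (Set.Iio 0) = 0) ∧
      (∀ u : V, 0 ≤ ε u) ∧
      ∀ u : V, Consistent t lam μ ε u := by
  let μ : V → Measure ℝ := fun u =>
    if h : (t.chi u).Nonempty then (hmom u h).1.choose else Measure.dirac 0
  have hrep : ∀ u, IsRepMeasure (μ u) fun n => ‖iterApp (shift t lam) n (evec u)‖ ^ 2 := by
    intro u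
    by_cases h : (t.chi u).Nonempty
    · simpa only [μ, dif_pos h] using (hmom u h).1.choose_spec
    · simpa only [μ, dif_neg h] using isRepMeasure_dirac_zero
        (norm_sq_iterApp_shift_evec_zero t lam u)
        (norm_sq_iterApp_shift_evec_succ_of_chi_eq_empty t lam hdom
          (Set.not_nonempty_iff_eq_empty.1 h))
  have hprob : ∀ u, IsProbabilityMeasure (μ u) := fun u =>
    (hrep u).isProbabilityMeasure (norm_sq_iterApp_shift_evec_zero t lam u)
  refine ⟨μ, fun u => (μ u {0}).toReal, fun u => ⟨hprob u, (hrep u).1⟩,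
    fun u => ENNReal.toReal_nonneg, fun u => consistent_of_mumap_eq_sum (hrep u).1 ?_⟩
  by_cases h : (t.chi u).Nonempty
  · exact (hmom u h).2 (hrep u).mumap (isRepMeasure_sum_smul (fun v => hrep v)
      (fun n => sq_nonneg _) (ofReal_norm_sq_iterApp_shift_evec_succ t lam hdom · u))
  · have hu := Set.not_nonempty_iff_eq_empty.1 h
    have := Set.isEmpty_coe_sort.2 hu
    rw [Measure.sum_of_isEmpty]
    exact (hrep u).mumap.eq_zero
      (norm_sq_iterApp_shift_evec_succ_of_chi_eq_empty t lam hdom hu 0)
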